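/- For all n ≥ 4, ∑_{j=1}^{n-2} b(n-2, j) ≤ (5/48)·φ(n-1). -/

import Mathlib

/-- `F n = (a n ·, b n ·, φ n)` from the recursive construction;
    `φ 1 := 1` by convention. -/
def F : ℕ → ((ℕ → ℚ) × (ℕ → ℚ) × ℚ)
  | 0 => (fun _ => 0, fun _ => 0, 1)
  | 1 => (fun j => if j = 1 then 1 else 0, fun j => if j = 1 then 1 else 0, 1)
  | (n+2) =>
      let p := F (n+1)
      let th : ℚ := 3 * p.1 (n+1)
      let ph : ℚ := if n = 0 then 4
        else 4 * ∑ j ∈ Finset.Icc 1 (n+1), (th * p.2.1 j - 3 * p.1 j)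
      (fun j => if j = n+2 then ph else 4 * p.1 j,
       fun j => if j = n+2 then 1 else (1 + th) * p.2.1 j,
       ph)

/-- coefficient `a(n,j)` -/
def a (n j : ℕ) : ℚ := (F n).1 j
/-- coefficient `b(n,j)` -/
def b (n j : ℕ) : ℚ := (F n).2.1 j
/-- `φ(n)` -/
def phi (n : ℕ) : ℚ := (F n).2.2
/-- `θ(n) = 3·a(n-1,n-1)` -/
def theta (n : ℕ) : ℚ := 3 * a (n-1) (n-1)


/-!
Write `S m = ∑ⱼ b(m,j)` and `A m = ∑ⱼ a(m,j)`. Since `θ(m+1) = 3 φ(m)`, summing the defining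
recursions over `j` collapses them to the three-term system
`φ(m+1) = 12 (φ(m) S m - A m)`, `S (m+1) = 1 + (1 + 3 φ(m)) S m`, `A (m+1) = 4 A m + φ(m+1)`
for `m ≥ 2`. The claim `S m ≤ 5/48 · φ(m+1)` is then the inequality `5 A m ≤ (5 φ(m) - 4) S m`,
which holds at `m = 2` and is preserved by the system.
-/

def bRowSum (m : ℕ) : ℚ := ∑ j ∈ Finset.Icc 1 m, b m j

def aRowSum (m : ℕ) : ℚ := ∑ j ∈ Finset.Icc 1 m, a m j

lemma a_self (n : ℕ) : a (n + 1) (n + 1) = phi (n + 1) := by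
  cases n <;> simp [a, phi, F]

lemma b_self (n : ℕ) : b (n + 2) (n + 2) = 1 := by
  simp [b, F.eq_3]

lemma a_add_two_of_le {n j : ℕ} (hj : j ≤ n + 1) : a (n + 2) j = 4 * a (n + 1) j := by
  simp only [a, F.eq_3]
  rw [if_neg (by omega)]

lemma b_add_two_of_le {n j : ℕ} (hj : j ≤ n + 1) :
    b (n + 2) j = (1 + 3 * phi (n + 1)) * b (n + 1) j := by
  have h := a_self n
  simp only [a] at h
  simp only [b, F.eq_3]
  rw [if_neg (by omega), h]

lemma phi_add_three (n : ℕ) :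
    phi (n + 3) =
      4 * ∑ j ∈ Finset.Icc 1 (n + 2), (3 * phi (n + 2) * b (n + 2) j - 3 * a (n + 2) j) := by
  have h := a_self (n + 1)
  simp only [a, b] at h ⊢
  rw [phi, F.eq_3, if_neg n.succ_ne_zero, h]

lemma phi_add_three_eq_rowSums (n : ℕ) :
    phi (n + 3) = 12 * (phi (n + 2) * bRowSum (n + 2) - aRowSum (n + 2)) := by
  rw [phi_add_three, Finset.sum_sub_distrib, ← Finset.mul_sum, ← Finset.mul_sum, bRowSum, aRowSum]
  ring

lemma bRowSum_add_two (n : ℕ) :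
    bRowSum (n + 2) = 1 + (1 + 3 * phi (n + 1)) * bRowSum (n + 1) := by
  rw [bRowSum, Finset.sum_Icc_succ_top (by omega), b_self, bRowSum, Finset.mul_sum,
    Finset.sum_congr rfl fun j hj => b_add_two_of_le (Finset.mem_Icc.mp hj).2]
  ring

lemma aRowSum_add_two (n : ℕ) : aRowSum (n + 2) = 4 * aRowSum (n + 1) + phi (n + 2) := by
  rw [aRowSum, Finset.sum_Icc_succ_top (by omega), a_self, aRowSum, Finset.mul_sum,
    Finset.sum_congr rfl fun j hj => a_add_two_of_le (Finset.mem_Icc.mp hj).2]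

lemma phi_two : phi 2 = 4 := by
  simp [phi, F]

lemma bRowSum_two : bRowSum 2 = 5 := by
  simp [bRowSum, Finset.sum_Icc_succ_top, b, F]
  norm_num

lemma aRowSum_two : aRowSum 2 = 8 := by
  simp [aRowSum, Finset.sum_Icc_succ_top, a, F]
  norm_num

section Invariant

variable {K : Type*} [Field K] [LinearOrder K] [IsStrictOrderedRing K]

structure RowInvariant (φ S A : K) : Prop where
  four_le : 4 ≤ φ
  one_le : 1 ≤ S
  key : 5 * A ≤ (5 * φ - 4) * S

namespace RowInvariant

variable {φ S A : K}

lemma le_next (h : RowInvariant φ S A) : S ≤ 5 / 48 * (12 * (φ * S - A)) := by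
  linarith [h.key]

lemma step (h : RowInvariant φ S A) :
    RowInvariant (12 * (φ * S - A)) (1 + (1 + 3 * φ) * S) (4 * A + 12 * (φ * S - A)) := by
  have hφ := h.four_le
  have hS := h.one_le
  have hnext : 48 / 5 * S ≤ 12 * (φ * S - A) := by linarith [h.key]
  refine ⟨by linarith, by nlinarith, ?_⟩
  nlinarith [h.key, mul_le_mul_of_nonneg_right hnext (by positivity : (0 : K) ≤ (1 + 3 * φ) * S),
    mul_nonneg (sub_nonneg.mpr hS) (sub_nonneg.mpr hφ)]

end RowInvariant

end Invariant

lemma rowInvariant_add_two (n : ℕ) :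
    RowInvariant (phi (n + 2)) (bRowSum (n + 2)) (aRowSum (n + 2)) := by
  induction n with
  | zero =>
    rw [phi_two, bRowSum_two, aRowSum_two]
    exact ⟨by norm_num, by norm_num, by norm_num⟩
  | succ n ih =>
    rw [bRowSum_add_two, aRowSum_add_two, phi_add_three_eq_rowSums]
    exact ih.step

theorem sum_b_bound (n : ℕ) (hn : 4 ≤ n) :
    ∑ j ∈ Finset.Icc 1 (n-2), b (n-2) j ≤ (5/48 : ℚ) * phi (n-1) := by
  obtain ⟨k, rfl⟩ : ∃ k, n = k + 4 := ⟨n - 4, by omega⟩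
  rw [show k + 4 - 2 = k + 2 by omega, show k + 4 - 1 = k + 3 by omega,
    phi_add_three_eq_rowSums]
  exact (rowInvariant_add_two k).le_next
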